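/- arXiv:2010.14033 — 3 statements merged into one kernel-verified Lean document; each statement's English description precedes it below -/
import Mathlib

section
/- Let P be an m-partition of a finite set X. Then Γ(X,P) ∩ Σ(X,P) = S(X,P). -/
/-- `B : ι → Set X` is a partition of `X` into nonempty pairwise disjoint blocks. -/
def IsPartition {X ι : Type*} (B : ι → Set X) : Prop :=
  (∀ i, (B i).Nonempty) ∧ (Pairwise fun i j => Disjoint (B i) (B j)) ∧ (⋃ i, B i) = Set.univ

/-- membership in `T(X,P)`: every block maps into some block. -/
def MapsInto {X ι : Type*} (B : ι → Set X) (f : X → X) : Prop := ∀ i, ∃ j, f '' B i ⊆ B j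

/-- membership in `Γ(X,P)`: every block maps onto some block. -/
def MapsOnto {X ι : Type*} (B : ι → Set X) (f : X → X) : Prop := ∀ i, ∃ j, f '' B i = B j

/-- membership in `Σ(X,P)`. -/
def InSigma {X ι : Type*} (B : ι → Set X) (f : X → X) : Prop :=
  MapsInto B f ∧ ∀ i, (Set.range f ∩ B i).Nonempty

/-- membership in `S(X,P)`, the group of units of `T(X,P)`. -/
def IsUnitT {X ι : Type*} (B : ι → Set X) (f : X → X) : Prop :=
  MapsInto B f ∧ ∃ g, MapsInto B g ∧ f ∘ g = id ∧ g ∘ f = id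

/-- Stirling numbers of the second kind. -/
def stirling2 : ℕ → ℕ → ℕ
  | 0, 0 => 1
  | 0, _ + 1 => 0
  | _ + 1, 0 => 0
  | n + 1, k + 1 => (k + 1) * stirling2 n (k + 1) + stirling2 n k

/-!
A map in `Γ ∩ Σ` hits every block, and since it maps blocks onto blocks, every block is the
image of a block; so the map is surjective, hence bijective on the finite set `X`, and its
inverse maps each block `f '' B i` back onto `B i`. Conversely, a unit `f` with inverse `g`
maps `B i` into some `B j`, and `g` maps `B j` into a block that must be `B i`, so
`B j ⊆ f '' B i`; surjectivity of `f` gives `Σ`.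
-/

open Function

namespace IsPartition

variable {X ι : Type*} {B : ι → Set X}

theorem exists_mem (hP : IsPartition B) (x : X) : ∃ i, x ∈ B i :=
  Set.mem_iUnion.mp (hP.2.2 ▸ Set.mem_univ x)

theorem eq_of_mem (hP : IsPartition B) {x : X} {i j : ι} (hi : x ∈ B i) (hj : x ∈ B j) :
    i = j :=
  by_contra fun h => Set.disjoint_left.mp (hP.2.1 h) hi hj

end IsPartition

section

variable {X ι : Type*} {B : ι → Set X} {f : X → X}

theorem exists_image_eq_of_mapsOnto_of_inSigma (hP : IsPartition B) (hgam : MapsOnto B f)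
    (hsig : InSigma B f) (j : ι) : ∃ i, f '' B i = B j := by
  obtain ⟨_, ⟨x, rfl⟩, hxj⟩ := hsig.2 j
  obtain ⟨i, hxi⟩ := hP.exists_mem x
  obtain ⟨k, hk⟩ := hgam i
  have hxk : f x ∈ B k := hk ▸ Set.mem_image_of_mem f hxi
  exact ⟨i, hP.eq_of_mem hxk hxj ▸ hk⟩

theorem surjective_of_forall_exists_image_eq (hP : IsPartition B)
    (himg : ∀ j, ∃ i, f '' B i = B j) : Surjective f := by
  intro y
  obtain ⟨j, hyj⟩ := hP.exists_mem y
  obtain ⟨i, hi⟩ := himg j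
  obtain ⟨x, -, hx⟩ := hi ▸ hyj
  exact ⟨x, hx⟩

theorem mapsInto_of_leftInverse_of_forall_exists_image_eq {g : X → X} (hgf : LeftInverse g f)
    (himg : ∀ j, ∃ i, f '' B i = B j) : MapsInto B g := by
  intro j
  obtain ⟨i, hi⟩ := himg j
  exact ⟨i, hi ▸ (hgf.image_image (B i)).le⟩

theorem isUnitT_of_mapsOnto_of_inSigma [Finite X] (hP : IsPartition B) (hgam : MapsOnto B f)
    (hsig : InSigma B f) : IsUnitT B f := by
  have himg := exists_image_eq_of_mapsOnto_of_inSigma hP hgam hsig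
  have hbij : Bijective f :=
    Finite.surjective_iff_bijective.mp (surjective_of_forall_exists_image_eq hP himg)
  obtain ⟨g, hgf, hfg⟩ := bijective_iff_has_inverse.mp hbij
  exact ⟨hsig.1, g, mapsInto_of_leftInverse_of_forall_exists_image_eq hgf himg,
    hfg.comp_eq_id, hgf.comp_eq_id⟩

theorem IsUnitT.mapsOnto (hP : IsPartition B) (hf : IsUnitT B f) : MapsOnto B f := by
  obtain ⟨hT, g, hTg, hfg, hgf⟩ := hf
  intro i
  obtain ⟨j, hj⟩ := hT i
  obtain ⟨k, hk⟩ := hTg j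
  obtain ⟨x, hx⟩ := hP.1 i
  obtain rfl : k = i := hP.eq_of_mem (hk ⟨f x, hj ⟨x, hx, rfl⟩, congrFun hgf x⟩) hx
  exact ⟨j, hj.antisymm fun y hy => ⟨g y, hk ⟨y, hy, rfl⟩, congrFun hfg y⟩⟩

theorem IsUnitT.inSigma (hne : ∀ i, (B i).Nonempty) (hf : IsUnitT B f) : InSigma B f := by
  obtain ⟨hT, g, -, hfg, -⟩ := hf
  refine ⟨hT, fun i => ?_⟩
  obtain ⟨x, hx⟩ := hne i
  exact ⟨x, ⟨g x, congrFun hfg x⟩, hx⟩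

end

/-- For finite X, Γ(X,P) ∩ Σ(X,P) = S(X,P). -/
theorem gamma_inter_sigma_eq_units {X : Type*} [Finite X] {m : ℕ} (B : Fin m → Set X)
    (hP : IsPartition B) :
    ∀ f : X → X, (MapsOnto B f ∧ InSigma B f) ↔ IsUnitT B f :=
  fun _ => ⟨fun ⟨hgam, hsig⟩ => isUnitT_of_mapsOnto_of_inSigma hP hgam hsig,
    fun hf => ⟨hf.mapsOnto hP, hf.inSigma hP.1⟩⟩
end

section
/- If P is a partition of a finite set X with at most two blocks, then the semigroup Γ(X,P) is regular. -/
/-!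
With at most two blocks, the block map `σ` induced by `f ∈ Γ(X,P)` satisfies `σ³ = σ`, so `f` maps
its range, a union of blocks, onto itself; `X` being finite, `f` is then a bijection of its range.
Inverting `f` on its range and taking the identity elsewhere gives `g ∈ Γ(X,P)` with `f g f = f`.
-/

theorem apply_apply_apply_eq_of_card_le_two {ι : Type*} [Finite ι] (hcard : Nat.card ι ≤ 2)
    (σ : ι → ι) (i : ι) : σ (σ (σ i)) = σ i := by
  have := Fintype.ofFinite ι
  obtain ⟨a, b, hab, heq⟩ := Fintype.exists_ne_map_eq_of_card_lt (fun k : Fin 3 => σ^[k] i)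
    (by rw [Fintype.card_fin, ← Nat.card_eq_fintype_card]; omega)
  have hcycle : i = σ i ∨ i = σ (σ i) ∨ σ i = σ (σ i) := by
    fin_cases a <;> fin_cases b <;> simp at hab heq <;> tauto
  rcases hcycle with h | h | h
  · rw [← h, ← h, ← h]
  · rw [← h]
  · rw [← h, ← h]

section Partition

open Set Function

variable {X ι : Type*} {B : ι → Set X}

theorem IsPartition.exists_mem_s10 (hP : IsPartition B) (x : X) : ∃ i, x ∈ B i :=
  mem_iUnion.mp (hP.2.2 ▸ mem_univ x)

theorem IsPartition.eq_of_mem_of_mem (hP : IsPartition B) {x : X} {i j : ι} (hi : x ∈ B i)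
    (hj : x ∈ B j) : i = j :=
  by_contra fun h => disjoint_left.mp (hP.2.1 h) hi hj

theorem IsPartition.range_eq_iUnion (hP : IsPartition B) {f : X → X} {σ : ι → ι}
    (hσ : ∀ i, f '' B i = B (σ i)) : range f = ⋃ i, B (σ i) := by
  rw [← image_univ, ← hP.2.2, image_iUnion]
  exact iUnion_congr hσ

theorem IsPartition.subset_range_or_disjoint (hP : IsPartition B) {f : X → X}
    (hf : MapsOnto B f) (i : ι) : B i ⊆ range f ∨ Disjoint (B i) (range f) := by
  refine or_iff_not_imp_right.mpr fun hmeet => ?_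
  obtain ⟨_, hx, y, rfl⟩ := not_disjoint_iff.mp hmeet
  obtain ⟨k, hy⟩ := hP.exists_mem_s10 y
  obtain ⟨j, hj⟩ := hf k
  obtain rfl : i = j := hP.eq_of_mem_of_mem hx (hj ▸ mem_image_of_mem f hy)
  exact hj ▸ image_subset_range f (B k)

theorem IsPartition.exists_subset_range_image_eq (hP : IsPartition B) {f : X → X}
    (hf : MapsOnto B f) (hrange : f '' range f = range f) {i : ι} (hsub : B i ⊆ range f) :
    ∃ j, B j ⊆ range f ∧ f '' B j = B i := by
  obtain ⟨x, hx⟩ := hP.1 i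
  obtain ⟨y, hy, rfl⟩ : x ∈ f '' range f := hrange.symm ▸ hsub hx
  obtain ⟨j, hyj⟩ := hP.exists_mem_s10 y
  obtain ⟨k, hk⟩ := hf j
  have hj : B j ⊆ range f :=
    (hP.subset_range_or_disjoint hf j).resolve_right (not_disjoint_iff.mpr ⟨y, hyj, hy⟩)
  have hki : k = i := hP.eq_of_mem_of_mem (hk ▸ mem_image_of_mem f hyj) hx
  exact ⟨j, hj, hki ▸ hk⟩

theorem MapsOnto.exists_inner_inverse_of_image_range_eq [Finite X] (hP : IsPartition B)
    {f : X → X} (hf : MapsOnto B f) (hrange : f '' range f = range f) :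
    ∃ g, MapsOnto B g ∧ f ∘ g ∘ f = f := by
  classical
  rcases isEmpty_or_nonempty X with _ | _
  · exact ⟨f, hf, funext isEmptyElim⟩
  have hinj : InjOn f (range f) := injOn_of_ncard_image_eq (by rw [hrange])
  set g := (range f).piecewise (invFunOn f (range f)) id
  refine ⟨g, fun i => ?_, funext fun x => ?_⟩
  · rcases hP.subset_range_or_disjoint hf i with hsub | hdisj
    · obtain ⟨j, hj, hji⟩ := hP.exists_subset_range_image_eq hf hrange hsub
      have hg : g '' B i = invFunOn f (range f) '' B i :=
        image_congr fun x hx => piecewise_eq_of_mem _ _ _ (hsub hx)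
      exact ⟨j, by rw [hg, ← hji, hinj.invFunOn_image hj]⟩
    · have hg : g '' B i = id '' B i :=
        image_congr fun x hx => piecewise_eq_of_notMem _ _ _ (disjoint_left.mp hdisj hx)
      exact ⟨i, hg.trans (image_id _)⟩
  · simp only [comp_apply, g, piecewise_eq_of_mem _ _ _ (mem_range_self x)]
    have hfx : f x ∈ f '' range f := by rw [hrange]; exact mem_range_self x
    exact invFunOn_eq hfx

theorem MapsOnto.image_range_eq_of_card_le_two [Finite ι] (hP : IsPartition B)
    (hcard : Nat.card ι ≤ 2) {f : X → X} (hf : MapsOnto B f) : f '' range f = range f := by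
  choose σ hσ using hf
  have hσ3 := apply_apply_apply_eq_of_card_le_two hcard σ
  rw [hP.range_eq_iUnion hσ, image_iUnion, iUnion_congr fun i => hσ (σ i)]
  exact le_antisymm (iUnion_mono' fun i => ⟨σ i, le_rfl⟩)
    (iUnion_mono' fun i => ⟨σ i, by rw [hσ3]⟩)

end Partition

/-- If P has at most two blocks (X finite), then Γ(X,P) is regular. -/
theorem gamma_regular_of_le_two_blocks {X ι : Type*} [Finite X] [Finite ι]
    (B : ι → Set X) (hP : IsPartition B) (hcard : Nat.card ι ≤ 2) :
    ∀ f : X → X, MapsOnto B f → ∃ g, MapsOnto B g ∧ f ∘ g ∘ f = f := fun _ hf =>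
  hf.exists_inner_inverse_of_image_range_eq hP (hf.image_range_eq_of_card_le_two hP hcard)
end

section
/- Let P be an (m,k)-partition of a finite set X, Q an r-subpartition of P containing at least one block of minimal size n_1, with r_i blocks of size n_i in Q for each i. Let A_Q = {f ∈ Γ(X,P) | the range of f is the union of the blocks of Q}. Then the number of idempotents in A_Q equals ∏_{i=1}^{k} ( Σ_{j=1}^{i} r_j · n_j! · S(n_i, n_j) )^{m_i − r_i}. -/
/-!
Restricting `f` to the blocks, `f` is an idempotent of `Γ(X,P)` with range `⋃ Q` exactly when
it fixes every block of `Q` pointwise and maps every other block onto some block of `Q`. These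
conditions are independent from block to block, so the count is a product over the blocks outside
`Q`. A block of size `n_i` maps onto a given block of size `n_j` in as many ways as there are
surjections, `n_j! * S(n_i, n_j)`, and this vanishes for `j > i` since then `n_i < n_j`.
-/

open Function Set Nat

theorem stirling2_eq_stirlingSecond : ∀ n k, stirling2 n k = stirlingSecond n k
  | 0, 0 | 0, _ + 1 | _ + 1, 0 => rfl
  | n + 1, k + 1 => by
    rw [stirling2, stirlingSecond_succ_succ, stirling2_eq_stirlingSecond n (k + 1),
      stirling2_eq_stirlingSecond n k]

section Surjections

variable {α β : Type*}

def rangeEqEquivSurjective (s : Set β) :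
    {g : α → β // range g = s} ≃ {g : α → s // Surjective g} where
  toFun g := ⟨codRestrict g.1 s fun a => g.2.subset (mem_range_self a),
    (surjective_codRestrict _).2 g.2⟩
  invFun g := ⟨Subtype.val ∘ g.1, by
    rw [range_comp, g.2.range_eq, image_univ, Subtype.range_coe]⟩
  left_inv _ := rfl
  right_inv _ := rfl

theorem card_surjective_congr {α' β' : Type*} (ea : α ≃ α') (eb : β ≃ β') :
    Nat.card {f : α → β // Surjective f} = Nat.card {f : α' → β' // Surjective f} :=
  Nat.card_congr <| (ea.arrowCongr eb).subtypeEquiv fun f => by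
    simp [Equiv.arrowCongr, EquivLike.comp_surjective, EquivLike.surjective_comp]

theorem insert_eq_univ_iff {y : β} {s : Set β} :
    insert y s = univ ↔ s = univ ∨ s = {y}ᶜ := by
  refine ⟨fun h => ?_, ?_⟩
  · by_cases hy : y ∈ s
    · exact .inl (insert_eq_of_mem hy ▸ h)
    · refine .inr (Set.ext fun z => ⟨fun hz => ?_, fun hz => ?_⟩)
      · rintro rfl
        exact hy hz
      · exact (mem_insert_iff.1 (h ▸ mem_univ z)).resolve_left hz
  · rintro (rfl | rfl)
    · exact insert_eq_of_mem (mem_univ y)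
    · rw [insert_eq, union_compl_self]

theorem card_surjective_option [Finite α] [Fintype β] :
    Nat.card {f : Option α → β // Surjective f} =
      ∑ y : β, (Nat.card {g : α → β // Surjective g} +
        Nat.card {g : α → ({y}ᶜ : Set β) // Surjective g}) := by
  classical
  -- `f none = y`, and `f ∘ some` must hit every point except possibly `y`
  have split (y : β) : {g : α → β // insert y (range g) = univ} ≃
      {g : α → β // Surjective g} ⊕ {g : α → ({y}ᶜ : Set β) // Surjective g} :=
    (Equiv.subtypeEquivRight fun g => insert_eq_univ_iff).trans <|
      (subtypeOrEquiv _ _ <| Pi.disjoint_iff.2 fun g => Prop.disjoint_iff.2 fun ⟨hu, hc⟩ => by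
        have hy : y ∈ range g := hu ▸ mem_univ y
        exact (hc ▸ hy) rfl).trans <|
        Equiv.sumCongr (Equiv.subtypeEquivRight fun g => range_eq_univ)
          (rangeEqEquivSurjective _)
  calc Nat.card {f : Option α → β // Surjective f}
      = Nat.card (Σ y : β, {g : α → β // insert y (range g) = univ}) :=
        Nat.card_congr <| (Equiv.piOptionEquivProd.subtypeEquiv fun f => by
          simp [← range_eq_univ, Option.range_eq, comp_def]).trans
          (Equiv.subtypeProdEquivSigmaSubtype fun y g => insert y (range g) = univ)
    _ = _ := by simp [Nat.card_sigma, fun y => Nat.card_congr (split y), Nat.card_sum]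

theorem card_surjective [Finite α] [Finite β] :
    Nat.card {f : α → β // Surjective f} =
      (Nat.card β)! * stirlingSecond (Nat.card α) (Nat.card β) := by
  induction α using Finite.induction_empty_option generalizing β with
  | of_equiv e h =>
    rw [← card_surjective_congr e (Equiv.refl β), h, Nat.card_congr e]
  | h_empty =>
    rcases isEmpty_or_nonempty β with hβ | hβ
    · simp only [Nat.card_of_isEmpty, stirlingSecond_zero, factorial_zero]
      exact Nat.card_eq_one_iff_unique.2
        ⟨⟨fun _ _ => Subtype.ext (funext isEmptyElim)⟩,
          ⟨⟨isEmptyElim, isEmptyElim⟩⟩⟩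
    · obtain ⟨c, hc⟩ := Nat.exists_eq_succ_of_ne_zero (Nat.card_pos (α := β)).ne'
      obtain ⟨y⟩ := hβ
      simp only [hc, Nat.card_of_isEmpty, stirlingSecond_zero_succ, mul_zero]
      exact Nat.card_eq_zero.2 (.inl ⟨fun f => isEmptyElim (f.2 y).choose⟩)
  | h_option ih =>
    have := Fintype.ofFinite β
    have hcompl (y : β) : Nat.card ({y}ᶜ : Set β) = Nat.card β - 1 := by
      rw [Nat.card_coe_set_eq, ncard_compl, ncard_singleton]
    simp only [card_surjective_option, Finite.card_option, ih, hcompl, Finset.sum_const,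
      Finset.card_univ, smul_eq_mul, ← Nat.card_eq_fintype_card]
    rcases Nat.card β with _ | c
    · simp
    · rw [stirlingSecond_succ_succ, factorial_succ, Nat.add_sub_cancel]
      ring

end Surjections

theorem card_exists_range_eq {α X ι : Type*} [Finite α] [Nonempty α] [Finite X]
    {B : ι → Set X} (hB : Pairwise (Disjoint on B)) (Q : Finset ι) :
    Nat.card {F : α → X // ∃ q ∈ Q, range F = B q} =
      ∑ q ∈ Q, Nat.card {F : α → X // range F = B q} := by
  classical
  have := Fintype.ofFinite α
  have := Fintype.ofFinite X
  simp only [Nat.card_eq_fintype_card, Fintype.card_subtype]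
  rw [← Finset.card_biUnion]
  · congr 1
    ext F
    simp
  · intro q _ q' _ hqq'
    obtain ⟨a⟩ := ‹Nonempty α›
    refine Finset.disjoint_filter.2 fun F _ hq hq' => ?_
    exact disjoint_left.1 (hB hqq') (hq ▸ mem_range_self a) (hq' ▸ mem_range_self a)

namespace IsPartition

variable {X ι : Type*} {B : ι → Set X}

theorem existsUnique_mem (hP : IsPartition B) (x : X) : ∃! p, x ∈ B p := by
  obtain ⟨p, hp⟩ := mem_iUnion.1 (hP.2.2 ▸ mem_univ x : x ∈ ⋃ p, B p)
  exact ⟨p, hp, fun q hq => by_contra fun h => disjoint_left.1 (hP.2.1 h) hq hp⟩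

theorem eq_of_mem_s18 (hP : IsPartition B) {p q : ι} {x : X} (hp : x ∈ B p) (hq : x ∈ B q) :
    p = q :=
  (hP.existsUnique_mem x).unique hp hq

noncomputable def restrictEquiv (hP : IsPartition B) (γ : Type*) :
    (X → γ) ≃ ∀ p, B p → γ :=
  ((sigmaEquiv B hP.existsUnique_mem).arrowCongr (Equiv.refl γ)).symm.trans
    (Equiv.piCurry fun _ _ => γ)

theorem restrictEquiv_apply (hP : IsPartition B) {γ : Type*} (f : X → γ) (p : ι) :
    hP.restrictEquiv γ f p = (B p).domRestrict f :=
  rfl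

theorem range_eq_iUnion_image (hP : IsPartition B) {γ : Type*} (f : X → γ) :
    range f = ⋃ p, f '' B p := by
  rw [← image_univ, ← hP.2.2, image_iUnion]

theorem mapsOnto_idempotent_range_iff (hP : IsPartition B) (Q : Set ι) (f : X → X) :
    MapsOnto B f ∧ f ∘ f = f ∧ range f = ⋃ p ∈ Q, B p ↔
      ∀ p, (p ∈ Q → EqOn f id (B p)) ∧ (p ∉ Q → ∃ q ∈ Q, f '' B p = B q) := by
  constructor
  · rintro ⟨hOnto, hIdem, hRange⟩ p
    have hfix : ∀ y ∈ range f, f y = y := by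
      rintro _ ⟨x, rfl⟩
      exact congrFun hIdem x
    refine ⟨fun hp x hx => hfix x (hRange ▸ mem_biUnion hp hx), fun _ => ?_⟩
    obtain ⟨q, hq⟩ := hOnto p
    obtain ⟨y, hy⟩ := hP.1 q
    have : y ∈ ⋃ p ∈ Q, B p := hRange ▸ image_subset_range f (B p) (hq ▸ hy)
    obtain ⟨q', hq', hyq'⟩ := mem_iUnion₂.1 this
    exact ⟨q, hP.eq_of_mem_s18 hyq' hy ▸ hq', hq⟩
  · intro h
    have himage (p : ι) : ∃ q ∈ Q, f '' B p = B q := by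
      by_cases hp : p ∈ Q
      · exact ⟨p, hp, ((h p).1 hp).image_eq_self⟩
      · exact (h p).2 hp
    have hRange : range f = ⋃ p ∈ Q, B p := by
      refine hP.range_eq_iUnion_image f ▸ (iUnion_subset fun p => ?_).antisymm
        (iUnion₂_subset fun p hp => ?_)
      · obtain ⟨q, hq, himq⟩ := himage p
        exact himq ▸ subset_biUnion_of_mem (u := B) hq
      · exact ((h p).1 hp).image_eq_self ▸ subset_iUnion (fun p => f '' B p) p
    refine ⟨fun p => (himage p).imp fun _ => And.right, funext fun x => ?_, hRange⟩
    obtain ⟨q, hq, hx⟩ := mem_iUnion₂.1 (hRange ▸ mem_range_self x)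
    exact (h q).1 hq hx

theorem card_block_restrictions [Finite X] [DecidableEq ι] (hP : IsPartition B) (Q : Finset ι)
    (p : ι) :
    Nat.card {F : B p → X //
        (p ∈ Q → F = Subtype.val) ∧ (p ∉ Q → ∃ q ∈ Q, range F = B q)} =
      if p ∈ Q then 1 else
        ∑ q ∈ Q, (Nat.card (B q))! * stirlingSecond (Nat.card (B p)) (Nat.card (B q)) := by
  have := (hP.1 p).to_subtype
  split_ifs with hp
  · simp [hp]
  · simp only [hp, false_implies, not_false_eq_true, true_implies, true_and]
    rw [card_exists_range_eq hP.2.1]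
    simp only [Nat.card_congr (rangeEqEquivSurjective _), card_surjective]

theorem card_mapsOnto_idempotent_range [Finite X] [Fintype ι] [DecidableEq ι]
    (hP : IsPartition B) (Q : Finset ι) :
    Nat.card {f : X → X // MapsOnto B f ∧ f ∘ f = f ∧ range f = ⋃ p ∈ Q, B p} =
      ∏ p, if p ∈ Q then 1 else
        ∑ q ∈ Q, (Nat.card (B q))! * stirlingSecond (Nat.card (B p)) (Nat.card (B q)) := by
  have e := (hP.restrictEquiv X).subtypeEquiv
    (q := fun F => ∀ p,
      (p ∈ Q → F p = Subtype.val) ∧ (p ∉ Q → ∃ q ∈ Q, range (F p) = B q))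
    fun f => (hP.mapsOnto_idempotent_range_iff Q f).trans <| by
      simp only [restrictEquiv_apply, range_domRestrict, funext_iff, Subtype.forall, EqOn,
        domRestrict_apply, id, Finset.mem_coe]
  rw [← Finset.prod_congr rfl fun p _ => hP.card_block_restrictions Q p, ← Nat.card_pi]
  exact Nat.card_congr (e.trans (Equiv.subtypePiEquivPi (p := fun p F =>
    (p ∈ Q → F = Subtype.val) ∧ (p ∉ Q → ∃ q ∈ Q, range F = B q))))

end IsPartition

section SigmaIndex

open Finset

theorem card_filter_sigma_mk_mem {ι : Type*} {κ : ι → Type*} [∀ i, Fintype (κ i)]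
    [DecidableEq ι] [∀ i, DecidableEq (κ i)] (Q : Finset (Σ i, κ i)) (i : ι) :
    #{t : κ i | ⟨i, t⟩ ∈ Q} = #{q ∈ Q | q.1 = i} := by
  refine card_bij (fun t _ => ⟨i, t⟩) (fun t ht => by simpa using ht)
    (fun t _ t' _ h => sigma_mk_injective h) ?_
  rintro ⟨j, t⟩ hq
  obtain ⟨hq, rfl⟩ := mem_filter.1 hq
  exact ⟨t, by simpa using hq, rfl⟩

theorem prod_sigma_ite_mem {ι M : Type*} {κ : ι → Type*} [Fintype ι] [∀ i, Fintype (κ i)]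
    [DecidableEq ι] [∀ i, DecidableEq (κ i)] [CommMonoid M] (Q : Finset (Σ i, κ i))
    (W : ι → M) :
    ∏ p, (if p ∈ Q then 1 else W p.1) =
      ∏ i, W i ^ (Fintype.card (κ i) - #{q ∈ Q | q.1 = i}) := by
  rw [Fintype.prod_sigma]
  refine prod_congr rfl fun i _ => ?_
  rw [prod_ite, prod_const_one, one_mul, prod_const (W i), ← card_filter_sigma_mk_mem,
    ← Finset.card_univ,
    ← card_filter_add_card_filter_not (s := univ) fun t : κ i => ⟨i, t⟩ ∈ Q,
    Nat.add_sub_cancel_left]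

theorem sum_comp_sigma_fst {ι M : Type*} {κ : ι → Type*} [Fintype ι] [DecidableEq ι]
    [AddCommMonoid M] (Q : Finset (Σ i, κ i)) (g : ι → M) :
    ∑ q ∈ Q, g q.1 = ∑ j, #{q ∈ Q | q.1 = j} • g j := by
  simp only [← sum_fiberwise' Q Sigma.fst g, sum_const]

end SigmaIndex

theorem card_idempotents_A_Q_general {X : Type*} [Finite X] {k : ℕ} (n mcnt : Fin k → ℕ)
    (hmono : StrictMono n)
    (B : (Σ i : Fin k, Fin (mcnt i)) → Set X) (hP : IsPartition B)
    (hsize : ∀ i t, Nat.card (B ⟨i, t⟩) = n i)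
    (Q : Finset (Σ i : Fin k, Fin (mcnt i))) (r : Fin k → ℕ)
    (hr : ∀ i, (Q.filter fun p => p.1 = i).card = r i) :
    Nat.card {f : X → X //
        MapsOnto B f ∧ f ∘ f = f ∧ Set.range f = ⋃ p ∈ Q, B p} =
      ∏ i : Fin k,
        (∑ j ∈ Finset.Iic i, r j * (n j).factorial * stirling2 (n i) (n j)) ^ (mcnt i - r i) := by
  have hsum (i : Fin k) : ∑ q ∈ Q, (n q.1)! * stirlingSecond (n i) (n q.1) =
      ∑ j ∈ Finset.Iic i, r j * (n j)! * stirling2 (n i) (n j) := by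
    rw [sum_comp_sigma_fst Q fun j => (n j)! * stirlingSecond (n i) (n j),
      ← Finset.sum_subset (Finset.subset_univ (Finset.Iic i))]
    · simp only [hr, smul_eq_mul, stirling2_eq_stirlingSecond, mul_assoc]
    · intro j _ hj
      rw [stirlingSecond_eq_zero_of_lt (hmono (not_le.1 (mt Finset.mem_Iic.2 hj))), mul_zero,
        smul_zero]
  calc _ = ∏ p, if p ∈ Q then 1 else ∑ q ∈ Q, (n q.1)! * stirlingSecond (n p.1) (n q.1) := by
        simp only [hP.card_mapsOnto_idempotent_range Q, fun p : Σ i, Fin (mcnt i) => hsize p.1 p.2]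
    _ = ∏ i, (∑ q ∈ Q, (n q.1)! * stirlingSecond (n i) (n q.1)) ^ (mcnt i - r i) := by
        rw [prod_sigma_ite_mem Q fun i => ∑ q ∈ Q, (n q.1)! * stirlingSecond (n i) (n q.1)]
        simp only [Fintype.card_fin, hr]
    _ = _ := by simp only [hsum]

/-- The number of idempotents of Γ(X,P) whose range is the union of the blocks of a
fixed r-subpartition Q (containing a block of the minimal size). -/
theorem card_idempotents_A_Q {X : Type*} [Finite X] {k : ℕ} [NeZero k] (n mcnt : Fin k → ℕ)
    (hmono : StrictMono n)
    (B : (Σ i : Fin k, Fin (mcnt i)) → Set X) (hP : IsPartition B)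
    (hsize : ∀ i t, Nat.card (B ⟨i, t⟩) = n i)
    (Q : Finset (Σ i : Fin k, Fin (mcnt i))) (r : Fin k → ℕ)
    (hr : ∀ i, (Q.filter fun p => p.1 = i).card = r i)
    (hr1 : 1 ≤ r 0) :
    Nat.card {f : X → X //
        MapsOnto B f ∧ f ∘ f = f ∧ Set.range f = ⋃ p ∈ Q, B p} =
      ∏ i : Fin k,
        (∑ j ∈ Finset.Iic i, r j * (n j).factorial * stirling2 (n i) (n j)) ^ (mcnt i - r i) :=
  card_idempotents_A_Q_general n mcnt hmono B hP hsize Q r hr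
end
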